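/- Let $u_1, u_2$ be the SPPS solutions of $(p u')' + q u = \omega^2 u$ normalized so that $u_2 = g_0 \sum_{\text{odd } n} \frac{\omega^{n-1}}{n!} X^{(n)}$. For the Dirichlet spectral problem $u(0) = u(1) = 0$ on $(0,1)$, $\omega^2$ is an eigenvalue if and only if $\omega$ is a zero of the entire/analytic function $\kappa(\omega) = \sum_{\text{even } m \geq 0} \frac{g_0(1) X^{(m+1)}(1)}{(m+1)!} \omega^m$, i.e., nontrivial solutions with $u(0)=u(1)=0$ exist exactly when $\kappa(\omega) = 0$. -/

import Mathlib

/-!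
Write `F = ∑ₖ X⁽²ᵏ⁺¹⁾ ω²ᵏ / (2k+1)!` and `H = ∑ₖ X⁽²ᵏ⁾ ω²ᵏ / (2k)!`. The recursive integrals
satisfy `‖X⁽ⁿ⁾(x)‖ ≤ (C |x|)ⁿ` on any interval where the weights are bounded by `C`, so both
series and their termwise derivatives converge locally uniformly, giving `F' = H / (p g₀²)`,
`H' = ω² g₀² F`, `F(0) = 0`, `H(0) = 1`. Since `g₀` solves the equation with `ω = 0`, this makes
`u₂ = g₀ F` a solution with `u₂(0) = 0` and `u₂'(0) = 1 / (p(0) g₀(0)) ≠ 0`. Uniqueness for the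
first-order system satisfied by `(u, p u')` shows that every solution vanishing at `0` is a
multiple of `u₂`; hence a Dirichlet eigenfunction exists iff `u₂(1) = g₀(1) F(1) = κ(ω)` vanishes.
-/

open scoped Nat

/-- The SPPS recursive integrals: `spps wodd weven 0 ≡ 1` and
`spps wodd weven n x = n ∫₀ˣ spps wodd weven (n-1) · w`, where the weight `w`
is `wodd` when `n` is odd and `weven` when `n` is even. -/
noncomputable def spps (wodd weven : ℝ → ℂ) : ℕ → ℝ → ℂ
  | 0 => fun _ => 1
  | n + 1 => fun x => (n + 1 : ℂ) *
      ∫ t in (0:ℝ)..x,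
        spps wodd weven n t * (if (n + 1) % 2 = 1 then wodd t else weven t)

open Set Filter Topology
open scoped Interval

theorem exists_Icc_subset_Ioo_of_mem {a b x y : ℝ} (hx : x ∈ Ioo a b) (hy : y ∈ Ioo a b) :
    ∃ α β, Icc α β ⊆ Ioo a b ∧ x ∈ Ioo α β ∧ y ∈ Ioo α β := by
  refine ⟨(a + min x y) / 2, (b + max x y) / 2, Icc_subset_Ioo ?_ ?_, ⟨?_, ?_⟩, ⟨?_, ?_⟩⟩ <;>
  grind [min_le_left, min_le_right, le_max_left, le_max_right, max_lt_iff, lt_min_iff]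

theorem hasDerivAt_integral_of_continuousOn {G : ℝ → ℂ} {a b c x : ℝ}
    (hG : ContinuousOn G (Ioo a b)) (hc : c ∈ Ioo a b) (hx : x ∈ Ioo a b) :
    HasDerivAt (fun y => ∫ t in c..y, G t) (G x) x :=
  intervalIntegral.integral_hasDerivAt_right
    ((hG.mono (ordConnected_Ioo.uIcc_subset hc hx)).intervalIntegrable)
    (hG.stronglyMeasurableAtFilter isOpen_Ioo x hx)
    (hG.continuousAt (isOpen_Ioo.mem_nhds hx))

theorem HasDerivAt.exists_mem_Ioo_ne_zero {f : ℝ → ℂ} {f' : ℂ} {a b : ℝ} (hf : HasDerivAt f f' a)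
    (hf' : f' ≠ 0) (hab : a < b) : ∃ x ∈ Ioo a b, f x ≠ 0 :=
  ((hf.eventually_ne hf').filter_mono (nhdsGT_le_nhdsNE a) |>.and (Ioo_mem_nhdsGT hab)).exists.imp
    fun _ h => ⟨h.2, h.1⟩

theorem contDiffOn_succ_of_hasDerivAt {f f' : ℝ → ℂ} {s : Set ℝ} {n : ℕ} (hs : IsOpen s)
    (hf : ∀ x ∈ s, HasDerivAt f (f' x) x) (hf' : ContDiffOn ℝ n f' s) :
    ContDiffOn ℝ (n + 1) f s := by
  rw [contDiffOn_succ_iff_deriv_of_isOpen hs]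
  exact ⟨fun x hx => (hf x hx).differentiableAt.differentiableWithinAt, by simp,
    hf'.congr fun x hx => (hf x hx).deriv⟩

theorem lipschitzWith_mul_snd_prodMk_mul_fst {R : Type*} [SeminormedRing R] (a b : R) :
    LipschitzWith (max ‖a‖₊ ‖b‖₊) fun Y : R × R => (a * Y.2, b * Y.1) := by
  have h := ((lipschitzWith_smul (β := R) a).comp (LipschitzWith.prod_snd (α := R))).prodMk
    ((lipschitzWith_smul (β := R) b).comp (LipschitzWith.prod_fst (β := R)))
  rwa [mul_one, mul_one] at h

/-- `y` solves `(p y')' + q y = μ y` on `s`, with the derivative `y'` of `y` given explicitly. -/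
def IsSturmLiouvilleSolution (p q : ℝ → ℂ) (μ : ℂ) (s : Set ℝ) (y y' : ℝ → ℂ) : Prop :=
  ∀ t ∈ s, HasDerivAt y (y' t) t ∧ HasDerivAt (fun x => p x * y' x) ((μ - q t) * y t) t

namespace IsSturmLiouvilleSolution

variable {p q y y' : ℝ → ℂ} {μ : ℂ} {s : Set ℝ}

theorem of_contDiffOn (hs : IsOpen s) (hp : ContDiffOn ℝ 1 p s) (hy : ContDiffOn ℝ 2 y s)
    (heq : ∀ x ∈ s, deriv (fun t => p t * deriv y t) x + q x * y x = μ * y x) :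
    IsSturmLiouvilleSolution p q μ s y (deriv y) := by
  intro x hx
  have hy' : ContDiffOn ℝ 1 (deriv y) s :=
    ((contDiffOn_succ_iff_deriv_of_isOpen (n := 1) hs).mp hy).2.2
  have hdiff {f : ℝ → ℂ} (hf : ContDiffOn ℝ 1 f s) : DifferentiableAt ℝ f x :=
    (hf.differentiableOn one_ne_zero).differentiableAt (hs.mem_nhds hx)
  refine ⟨(hdiff (hy.of_le one_le_two)).hasDerivAt, ?_⟩
  exact ((hdiff hp).mul (hdiff hy')).hasDerivAt.congr_deriv (by linear_combination heq x hx)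

theorem deriv_eq (h : IsSturmLiouvilleSolution p q μ s y y') (hs : IsOpen s) {x : ℝ}
    (hx : x ∈ s) : deriv (fun t => p t * deriv y t) x + q x * y x = μ * y x := by
  have hderiv : (fun t => p t * deriv y t) =ᶠ[𝓝 x] fun t => p t * y' t :=
    eventually_of_mem (hs.mem_nhds hx) fun t ht => by simp only [(h t ht).1.deriv]
  rw [hderiv.deriv_eq, (h x hx).2.deriv]
  ring

theorem const_mul (h : IsSturmLiouvilleSolution p q μ s y y') (c : ℂ) :
    IsSturmLiouvilleSolution p q μ s (fun t => c * y t) (fun t => c * y' t) := by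
  intro t ht
  refine ⟨(h t ht).1.const_mul c, ?_⟩
  show HasDerivAt (fun x => p x * (c * y' x)) ((μ - q t) * (c * y t)) t
  rw [show (fun x => p x * (c * y' x)) = fun x => c * (p x * y' x) by ext; ring]
  exact ((h t ht).2.const_mul c).congr_deriv (by ring)

theorem mono {t : Set ℝ} (h : IsSturmLiouvilleSolution p q μ s y y') (hts : t ⊆ s) :
    IsSturmLiouvilleSolution p q μ t y y' :=
  fun x hx => h x (hts hx)

theorem eqOn {z z' : ℝ → ℂ} {α β t₀ : ℝ} (hp : ContinuousOn p (Icc α β))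
    (hp₀ : ∀ t ∈ Icc α β, p t ≠ 0) (hq : ContinuousOn q (Icc α β))
    (hy : IsSturmLiouvilleSolution p q μ (Ioo α β) y y')
    (hz : IsSturmLiouvilleSolution p q μ (Ioo α β) z z') (ht₀ : t₀ ∈ Ioo α β)
    (h₀ : y t₀ = z t₀) (h₀' : y' t₀ = z' t₀) : EqOn y z (Ioo α β) := by
  obtain ⟨P, hP⟩ := isCompact_Icc.exists_bound_of_continuousOn (hp.inv₀ hp₀)
  obtain ⟨Q, hQ⟩ :=
    isCompact_Icc.exists_bound_of_continuousOn ((continuousOn_const (c := μ)).sub hq)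
  let v (t : ℝ) (Y : ℂ × ℂ) : ℂ × ℂ := ((p t)⁻¹ * Y.2, (μ - q t) * Y.1)
  have hv (t : ℝ) (ht : t ∈ Ioo α β) : LipschitzOnWith (max P Q).toNNReal (v t) univ := by
    refine ((lipschitzWith_mul_snd_prodMk_mul_fst _ _).weaken ?_).lipschitzOnWith
    rw [← NNReal.coe_le_coe, NNReal.coe_max, coe_nnnorm, coe_nnnorm, Real.coe_toNNReal']
    exact (max_le_max (hP t (Ioo_subset_Icc_self ht)) (hQ t (Ioo_subset_Icc_self ht))).trans
      (le_max_left _ _)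
  have hsys {f f' : ℝ → ℂ} (hf : IsSturmLiouvilleSolution p q μ (Ioo α β) f f') (t : ℝ)
      (ht : t ∈ Ioo α β) :
      HasDerivAt (fun t => (f t, p t * f' t)) (v t (f t, p t * f' t)) t ∧
        (f t, p t * f' t) ∈ univ :=
    ⟨((hf t ht).1.prodMk (hf t ht).2).congr_deriv
      (Prod.ext (inv_mul_cancel_left₀ (hp₀ t (Ioo_subset_Icc_self ht)) _).symm rfl), trivial⟩
  exact fun t ht => congrArg Prod.fst
    (ODE_solution_unique_of_mem_Ioo hv ht₀ (hsys hy) (hsys hz) (by rw [h₀, h₀']) ht)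

theorem exists_eqOn_const_mul {z z' : ℝ → ℂ} {α β t₀ : ℝ} (hp : ContinuousOn p (Icc α β))
    (hp₀ : ∀ t ∈ Icc α β, p t ≠ 0) (hq : ContinuousOn q (Icc α β))
    (hy : IsSturmLiouvilleSolution p q μ (Ioo α β) y y')
    (hz : IsSturmLiouvilleSolution p q μ (Ioo α β) z z') (ht₀ : t₀ ∈ Ioo α β)
    (hy₀ : y t₀ = 0) (hz₀ : z t₀ = 0) (hz₀' : z' t₀ ≠ 0) :
    ∃ c, EqOn y (fun t => c * z t) (Ioo α β) :=
  ⟨y' t₀ / z' t₀, hy.eqOn hp hp₀ hq (hz.const_mul _) ht₀ (by simp [hy₀, hz₀])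
    (by field_simp)⟩

theorem mul_of_hasDerivAt {g g' F H : ℝ → ℂ} (hs : IsOpen s)
    (hg : IsSturmLiouvilleSolution p q 0 s g g') (hg₀ : ∀ t ∈ s, g t ≠ 0)
    (hp₀ : ∀ t ∈ s, p t ≠ 0) (hF : ∀ t ∈ s, HasDerivAt F ((p t * g t ^ 2)⁻¹ * H t) t)
    (hH : ∀ t ∈ s, HasDerivAt H (μ * g t ^ 2 * F t) t) :
    IsSturmLiouvilleSolution p q μ s (fun t => g t * F t)
      (fun t => g' t * F t + H t / (p t * g t)) := by
  intro t ht
  have hpt := hp₀ t ht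
  have hgt := hg₀ t ht
  refine ⟨((hg t ht).1.mul (hF t ht)).congr_deriv (by field_simp), ?_⟩
  -- Near `t`, `p y' = (p g') F + H / g`: differentiating this form needs `(p g')'` but not `p'`.
  have hflux : (fun x => p x * g' x * F x + H x / g x) =ᶠ[𝓝 t]
      fun x => p x * (g' x * F x + H x / (p x * g x)) :=
    eventually_of_mem (hs.mem_nhds ht) fun x hx => by
      field_simp [hp₀ x hx, hg₀ x hx]
  refine ((((hg t ht).2.mul (hF t ht)).add ((hH t ht).div (hg t ht).1 hgt)).congr_of_eventuallyEq
    hflux.symm).congr_deriv ?_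
  field_simp
  ring

end IsSturmLiouvilleSolution

section Spps

variable {w₁ w₂ : ℝ → ℂ}

theorem spps_succ_apply_zero (n : ℕ) : spps w₁ w₂ (n + 1) 0 = 0 := by
  simp [spps]

theorem norm_spps_le {C x : ℝ} (hC₁ : ∀ t ∈ uIcc 0 x, ‖w₁ t‖ ≤ C)
    (hC₂ : ∀ t ∈ uIcc 0 x, ‖w₂ t‖ ≤ C) (n : ℕ) : ‖spps w₁ w₂ n x‖ ≤ (C * |x|) ^ n := by
  induction n generalizing x with
  | zero => simp [spps]
  | succ n ih =>
    have hC : 0 ≤ C := (norm_nonneg _).trans (hC₁ 0 left_mem_uIcc)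
    have hbound : ∀ t ∈ Ι (0:ℝ) x,
        ‖spps w₁ w₂ n t * (if (n + 1) % 2 = 1 then w₁ t else w₂ t)‖ ≤
          C ^ (n + 1) * |t - 0| ^ n := by
      intro t ht
      have hsub : uIcc 0 t ⊆ uIcc 0 x := uIcc_subset_uIcc_left (uIoc_subset_uIcc ht)
      have hw : ‖if (n + 1) % 2 = 1 then w₁ t else w₂ t‖ ≤ C := by
        split_ifs
        exacts [hC₁ t (uIoc_subset_uIcc ht), hC₂ t (uIoc_subset_uIcc ht)]
      calc _ ≤ (C * |t|) ^ n * C := by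
            rw [norm_mul]
            exact mul_le_mul (ih (fun s hs => hC₁ s (hsub hs)) (fun s hs => hC₂ s (hsub hs))) hw
              (norm_nonneg _) (by positivity)
        _ = C ^ (n + 1) * |t - 0| ^ n := by rw [sub_zero]; ring
    have hint : ‖∫ t in (0:ℝ)..x, spps w₁ w₂ n t * (if (n + 1) % 2 = 1 then w₁ t else w₂ t)‖ ≤
        C ^ (n + 1) * (|x - 0| ^ (n + 1) / (n + 1)) := by
      rw [intervalIntegral.norm_integral_eq_norm_integral_uIoc, ← integral_pow_abs_sub_uIoc,
        ← MeasureTheory.integral_const_mul]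
      refine MeasureTheory.norm_integral_le_of_norm_le
        (Continuous.integrableOn_uIoc (f := fun t : ℝ => C ^ (n + 1) * |t - 0| ^ n)
          (by fun_prop)) ?_
      exact (MeasureTheory.ae_restrict_iff' measurableSet_uIoc).mpr (.of_forall hbound)
    rw [sub_zero] at hint
    rw [spps, norm_mul]
    calc _ ≤ ((n:ℝ) + 1) * (C ^ (n + 1) * (|x| ^ (n + 1) / (n + 1))) := by
          gcongr
          norm_cast
      _ = (C * |x|) ^ (n + 1) := by field_simp; ring

end Spps

section SppsDeriv

variable {w₁ w₂ : ℝ → ℂ} {a b : ℝ}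

theorem hasDerivAt_spps_succ_of_continuousOn (hw₁ : ContinuousOn w₁ (Ioo a b))
    (hw₂ : ContinuousOn w₂ (Ioo a b)) (h₀ : (0:ℝ) ∈ Ioo a b) {n : ℕ}
    (hn : ContinuousOn (spps w₁ w₂ n) (Ioo a b)) {x : ℝ} (hx : x ∈ Ioo a b) :
    HasDerivAt (spps w₁ w₂ (n + 1))
      ((n + 1 : ℂ) * (spps w₁ w₂ n x * if (n + 1) % 2 = 1 then w₁ x else w₂ x)) x :=
  (hasDerivAt_integral_of_continuousOn (hn.mul (by split_ifs <;> assumption)) h₀ hx).const_mul _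

theorem continuousOn_spps (hw₁ : ContinuousOn w₁ (Ioo a b)) (hw₂ : ContinuousOn w₂ (Ioo a b))
    (h₀ : (0:ℝ) ∈ Ioo a b) (n : ℕ) : ContinuousOn (spps w₁ w₂ n) (Ioo a b) := by
  induction n with
  | zero => exact continuousOn_const
  | succ n ih =>
    exact HasDerivAt.continuousOn fun x hx =>
      hasDerivAt_spps_succ_of_continuousOn hw₁ hw₂ h₀ ih hx

theorem hasDerivAt_spps_succ (hw₁ : ContinuousOn w₁ (Ioo a b))
    (hw₂ : ContinuousOn w₂ (Ioo a b)) (h₀ : (0:ℝ) ∈ Ioo a b) (n : ℕ) {x : ℝ}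
    (hx : x ∈ Ioo a b) :
    HasDerivAt (spps w₁ w₂ (n + 1))
      ((n + 1 : ℂ) * (spps w₁ w₂ n x * if (n + 1) % 2 = 1 then w₁ x else w₂ x)) x :=
  hasDerivAt_spps_succ_of_continuousOn hw₁ hw₂ h₀ (continuousOn_spps hw₁ hw₂ h₀ n) hx

end SppsDeriv

noncomputable def sppsOdd (w₁ w₂ : ℝ → ℂ) (ω : ℂ) (x : ℝ) : ℂ :=
  ∑' k : ℕ, spps w₁ w₂ (2 * k + 1) x / ((2 * k + 1)! : ℂ) * ω ^ (2 * k)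

noncomputable def sppsEven (w₁ w₂ : ℝ → ℂ) (ω : ℂ) (x : ℝ) : ℂ :=
  ∑' k : ℕ, spps w₁ w₂ (2 * k) x / ((2 * k)! : ℂ) * ω ^ (2 * k)

section SppsSeries

variable {w₁ w₂ : ℝ → ℂ} {ω : ℂ}

theorem sppsOdd_apply_zero : sppsOdd w₁ w₂ ω 0 = 0 := by
  simp [sppsOdd, spps_succ_apply_zero]

theorem sppsEven_apply_zero : sppsEven w₁ w₂ ω 0 = 1 := by
  rw [sppsEven, tsum_eq_single 0 fun k hk => ?_]
  · simp [spps]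
  · obtain ⟨j, rfl⟩ := Nat.exists_eq_succ_of_ne_zero hk
    simp [mul_add, spps_succ_apply_zero]

theorem norm_div_factorial_mul_pow_le {X : ℂ} {K : ℝ} {n k : ℕ} (hkn : 2 * k ≤ n)
    (hX : ‖X‖ ≤ K ^ n) :
    ‖X / (n ! : ℂ) * ω ^ (2 * k)‖ ≤ K ^ (n - 2 * k) * ((K * ‖ω‖) ^ 2) ^ k / k ! := by
  have hfac : (k ! : ℝ) ≤ n ! := Nat.cast_le.mpr (Nat.factorial_le (by omega))
  calc ‖X / (n ! : ℂ) * ω ^ (2 * k)‖ = ‖X‖ / n ! * ‖ω‖ ^ (2 * k) := by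
        rw [norm_mul, norm_div, norm_pow, Complex.norm_natCast]
    _ ≤ K ^ n / k ! * ‖ω‖ ^ (2 * k) := by
        gcongr
        exact (norm_nonneg X).trans hX
    _ = K ^ (n - 2 * k) * ((K * ‖ω‖) ^ 2) ^ k / k ! := by
        rw [← pow_mul, mul_pow, ← mul_assoc, ← pow_add, Nat.sub_add_cancel hkn]
        ring

theorem hasDerivAt_spps_odd_term {a b x : ℝ} (hw₁ : ContinuousOn w₁ (Ioo a b))
    (hw₂ : ContinuousOn w₂ (Ioo a b)) (h₀ : (0:ℝ) ∈ Ioo a b) (hx : x ∈ Ioo a b) (k : ℕ) :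
    HasDerivAt (fun t => spps w₁ w₂ (2 * k + 1) t / ((2 * k + 1)! : ℂ) * ω ^ (2 * k))
      (w₁ x * (spps w₁ w₂ (2 * k) x / ((2 * k)! : ℂ) * ω ^ (2 * k))) x := by
  refine (((hasDerivAt_spps_succ hw₁ hw₂ h₀ (2 * k) hx).div_const _).mul_const _).congr_deriv ?_
  have hk : 2 * (k : ℂ) + 1 ≠ 0 := by exact_mod_cast Nat.succ_ne_zero (2 * k)
  rw [if_pos (by omega), Nat.factorial_succ]
  push_cast
  field_simp

theorem hasDerivAt_spps_even_term {a b x : ℝ} (hw₁ : ContinuousOn w₁ (Ioo a b))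
    (hw₂ : ContinuousOn w₂ (Ioo a b)) (h₀ : (0:ℝ) ∈ Ioo a b) (hx : x ∈ Ioo a b) (k : ℕ) :
    HasDerivAt (fun t => spps w₁ w₂ (2 * (k + 1)) t / ((2 * (k + 1))! : ℂ) * ω ^ (2 * (k + 1)))
      (ω ^ 2 * w₂ x * (spps w₁ w₂ (2 * k + 1) x / ((2 * k + 1)! : ℂ) * ω ^ (2 * k))) x := by
  refine (((hasDerivAt_spps_succ hw₁ hw₂ h₀ (2 * k + 1) hx).div_const _).mul_const _).congr_deriv ?_
  have hk : 2 * (k : ℂ) + 1 + 1 ≠ 0 := by exact_mod_cast Nat.succ_ne_zero (2 * k + 1)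
  rw [if_neg (by omega), show 2 * (k + 1) = 2 * k + 1 + 1 by ring, Nat.factorial_succ]
  push_cast
  field_simp
  ring

end SppsSeries

section SppsSeriesDeriv

variable {w₁ w₂ : ℝ → ℂ} {ω : ℂ} {a b C K : ℝ}

theorem summable_spps_even_terms (hX : ∀ n, ∀ t ∈ Ioo a b, ‖spps w₁ w₂ n t‖ ≤ K ^ n)
    {t : ℝ} (ht : t ∈ Ioo a b) :
    Summable fun k : ℕ => spps w₁ w₂ (2 * k) t / ((2 * k)! : ℂ) * ω ^ (2 * k) :=
  .of_norm_bounded (Real.summable_pow_div_factorial ((K * ‖ω‖) ^ 2)) fun k => by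
    simpa using norm_div_factorial_mul_pow_le le_rfl (hX (2 * k) t ht)

variable (h₀ : (0:ℝ) ∈ Ioo a b) (hC₁ : ∀ t ∈ Ioo a b, ‖w₁ t‖ ≤ C)
  (hC₂ : ∀ t ∈ Ioo a b, ‖w₂ t‖ ≤ C)
include h₀ hC₁ hC₂

theorem norm_spps_le_of_mem_Ioo (n : ℕ) {t : ℝ} (ht : t ∈ Ioo a b) :
    ‖spps w₁ w₂ n t‖ ≤ (C * max (-a) b) ^ n := by
  have hsub : uIcc 0 t ⊆ Ioo a b := ordConnected_Ioo.uIcc_subset h₀ ht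
  have hC : 0 ≤ C := (norm_nonneg _).trans (hC₁ 0 h₀)
  calc _ ≤ (C * |t|) ^ n :=
        norm_spps_le (fun s hs => hC₁ s (hsub hs)) (fun s hs => hC₂ s (hsub hs)) n
    _ ≤ (C * max (-a) b) ^ n := by
        gcongr
        exact abs_le.mpr ⟨by linarith [ht.1, le_max_left (-a) b],
          by linarith [ht.2, le_max_right (-a) b]⟩

variable (hw₁ : ContinuousOn w₁ (Ioo a b)) (hw₂ : ContinuousOn w₂ (Ioo a b))
include hw₁ hw₂

theorem hasDerivAt_sppsOdd_of_bounded {x : ℝ} (hx : x ∈ Ioo a b) :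
    HasDerivAt (sppsOdd w₁ w₂ ω) (w₁ x * sppsEven w₁ w₂ ω x) x := by
  set K := C * max (-a) b
  have hbound : ∀ (k : ℕ), ∀ t ∈ Ioo a b,
      ‖w₁ t * (spps w₁ w₂ (2 * k) t / ((2 * k)! : ℂ) * ω ^ (2 * k))‖ ≤
        C * (((K * ‖ω‖) ^ 2) ^ k / k !) := fun k t ht => by
    rw [norm_mul]
    refine mul_le_mul (hC₁ t ht) ?_ (norm_nonneg _) ((norm_nonneg _).trans (hC₁ t ht))
    simpa using norm_div_factorial_mul_pow_le le_rfl
      (norm_spps_le_of_mem_Ioo h₀ hC₁ hC₂ (2 * k) ht)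
  have h := hasDerivAt_tsum_of_isPreconnected
    ((Real.summable_pow_div_factorial ((K * ‖ω‖) ^ 2)).mul_left C) isOpen_Ioo isPreconnected_Ioo
    (fun k t ht => hasDerivAt_spps_odd_term hw₁ hw₂ h₀ ht k) hbound h₀
    (by simp [spps_succ_apply_zero]) hx
  rwa [tsum_mul_left] at h

theorem hasDerivAt_sppsEven_of_bounded {x : ℝ} (hx : x ∈ Ioo a b) :
    HasDerivAt (sppsEven w₁ w₂ ω) (ω ^ 2 * w₂ x * sppsOdd w₁ w₂ ω x) x := by
  set K := C * max (-a) b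
  have hX := fun n t (ht : t ∈ Ioo a b) => norm_spps_le_of_mem_Ioo h₀ hC₁ hC₂ n ht
  have hbound : ∀ (k : ℕ), ∀ t ∈ Ioo a b,
      ‖ω ^ 2 * w₂ t * (spps w₁ w₂ (2 * k + 1) t / ((2 * k + 1)! : ℂ) * ω ^ (2 * k))‖ ≤
        ‖ω‖ ^ 2 * C * (K * (((K * ‖ω‖) ^ 2) ^ k / k !)) := fun k t ht => by
    rw [norm_mul, norm_mul, norm_pow]
    have hC : 0 ≤ C := (norm_nonneg _).trans (hC₂ t ht)
    gcongr
    · exact hC₂ t ht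
    · simpa [mul_div_assoc] using
        norm_div_factorial_mul_pow_le (Nat.le_succ _) (hX (2 * k + 1) t ht)
  have h := hasDerivAt_tsum_of_isPreconnected
    ((Real.summable_pow_div_factorial ((K * ‖ω‖) ^ 2)).mul_left K |>.mul_left (‖ω‖ ^ 2 * C))
    isOpen_Ioo isPreconnected_Ioo (fun k t ht => hasDerivAt_spps_even_term hw₁ hw₂ h₀ ht k)
    hbound h₀ (by simp [mul_add, spps_succ_apply_zero]) hx
  rw [tsum_mul_left] at h
  -- the `k = 0` term of `sppsEven` is the constant `1`
  refine (h.const_add 1).congr_of_eventuallyEq (eventually_of_mem (isOpen_Ioo.mem_nhds hx) ?_)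
  intro t ht
  rw [sppsEven, (summable_spps_even_terms hX ht).tsum_eq_zero_add]
  simp [spps]

end SppsSeriesDeriv

section SppsSeriesDerivContinuous

variable {w₁ w₂ : ℝ → ℂ} {ω : ℂ} {a b x : ℝ} (hw₁ : ContinuousOn w₁ (Ioo a b))
  (hw₂ : ContinuousOn w₂ (Ioo a b)) (h₀ : (0:ℝ) ∈ Ioo a b) (hx : x ∈ Ioo a b)
include hw₁ hw₂ h₀ hx

theorem exists_Ioo_forall_norm_le : ∃ α β C, Ioo α β ⊆ Ioo a b ∧ (0:ℝ) ∈ Ioo α β ∧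
    x ∈ Ioo α β ∧ ∀ t ∈ Ioo α β, ‖w₁ t‖ ≤ C ∧ ‖w₂ t‖ ≤ C := by
  obtain ⟨α, β, hsub, h₀', hx'⟩ := exists_Icc_subset_Ioo_of_mem h₀ hx
  obtain ⟨C₁, hC₁⟩ := isCompact_Icc.exists_bound_of_continuousOn (hw₁.mono hsub)
  obtain ⟨C₂, hC₂⟩ := isCompact_Icc.exists_bound_of_continuousOn (hw₂.mono hsub)
  refine ⟨α, β, max C₁ C₂, Ioo_subset_Icc_self.trans hsub, h₀', hx', fun t ht => ?_⟩
  exact ⟨(hC₁ t (Ioo_subset_Icc_self ht)).trans (le_max_left _ _),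
    (hC₂ t (Ioo_subset_Icc_self ht)).trans (le_max_right _ _)⟩

theorem hasDerivAt_sppsOdd : HasDerivAt (sppsOdd w₁ w₂ ω) (w₁ x * sppsEven w₁ w₂ ω x) x := by
  obtain ⟨α, β, C, hsub, h₀', hx', hC⟩ := exists_Ioo_forall_norm_le hw₁ hw₂ h₀ hx
  exact hasDerivAt_sppsOdd_of_bounded h₀' (fun t ht => (hC t ht).1) (fun t ht => (hC t ht).2)
    (hw₁.mono hsub) (hw₂.mono hsub) hx'

theorem hasDerivAt_sppsEven :
    HasDerivAt (sppsEven w₁ w₂ ω) (ω ^ 2 * w₂ x * sppsOdd w₁ w₂ ω x) x := by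
  obtain ⟨α, β, C, hsub, h₀', hx', hC⟩ := exists_Ioo_forall_norm_le hw₁ hw₂ h₀ hx
  exact hasDerivAt_sppsEven_of_bounded h₀' (fun t ht => (hC t ht).1) (fun t ht => (hC t ht).2)
    (hw₁.mono hsub) (hw₂.mono hsub) hx'

end SppsSeriesDerivContinuous

noncomputable def sppsSecondSolution (p g : ℝ → ℂ) (ω : ℂ) (x : ℝ) : ℂ :=
  g x * sppsOdd (fun t => (p t * g t ^ 2)⁻¹) (fun t => g t ^ 2) ω x

noncomputable def sppsSecondSolutionDeriv (p g : ℝ → ℂ) (ω : ℂ) (x : ℝ) : ℂ :=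
  deriv g x * sppsOdd (fun t => (p t * g t ^ 2)⁻¹) (fun t => g t ^ 2) ω x +
    sppsEven (fun t => (p t * g t ^ 2)⁻¹) (fun t => g t ^ 2) ω x / (p x * g x)

section SppsSecondSolution

variable {a b : ℝ} {p q g : ℝ → ℂ} {ω : ℂ}

theorem sppsSecondSolution_eq_tsum (x : ℝ) : sppsSecondSolution p g ω x =
    ∑' k : ℕ, g x * spps (fun t => (p t * g t ^ 2)⁻¹) (fun t => g t ^ 2) (2 * k + 1) x /
      ((2 * k + 1)! : ℂ) * ω ^ (2 * k) := by
  simp_rw [sppsSecondSolution, sppsOdd, ← tsum_mul_left, mul_div_assoc, mul_assoc]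

theorem sppsSecondSolution_apply_zero : sppsSecondSolution p g ω 0 = 0 := by
  simp [sppsSecondSolution, sppsOdd_apply_zero]

theorem sppsSecondSolutionDeriv_apply_zero :
    sppsSecondSolutionDeriv p g ω 0 = (p 0 * g 0)⁻¹ := by
  simp [sppsSecondSolutionDeriv, sppsOdd_apply_zero, sppsEven_apply_zero]

variable (hp : ContDiffOn ℝ 1 p (Ioo a b)) (hp₀ : ∀ x ∈ Ioo a b, p x ≠ 0)
  (hg : ContDiffOn ℝ 2 g (Ioo a b)) (hg₀ : ∀ x ∈ Ioo a b, g x ≠ 0) (h₀ : (0:ℝ) ∈ Ioo a b)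
include hp hp₀ hg hg₀ h₀

theorem hasDerivAt_sppsOdd_sppsEven {x : ℝ} (hx : x ∈ Ioo a b) :
    HasDerivAt (sppsOdd (fun t => (p t * g t ^ 2)⁻¹) (fun t => g t ^ 2) ω)
      ((p x * g x ^ 2)⁻¹ * sppsEven (fun t => (p t * g t ^ 2)⁻¹) (fun t => g t ^ 2) ω x) x ∧
    HasDerivAt (sppsEven (fun t => (p t * g t ^ 2)⁻¹) (fun t => g t ^ 2) ω)
      (ω ^ 2 * g x ^ 2 * sppsOdd (fun t => (p t * g t ^ 2)⁻¹) (fun t => g t ^ 2) ω x) x := by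
  have hw₂ : ContinuousOn (fun t => g t ^ 2) (Ioo a b) := hg.continuousOn.pow 2
  have hw₁ : ContinuousOn (fun t => (p t * g t ^ 2)⁻¹) (Ioo a b) :=
    (hp.continuousOn.mul hw₂).inv₀ fun t ht => mul_ne_zero (hp₀ t ht) (pow_ne_zero 2 (hg₀ t ht))
  exact ⟨hasDerivAt_sppsOdd hw₁ hw₂ h₀ hx, hasDerivAt_sppsEven hw₁ hw₂ h₀ hx⟩

theorem isSturmLiouvilleSolution_sppsSecondSolution
    (hgsol : IsSturmLiouvilleSolution p q 0 (Ioo a b) g (deriv g)) :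
    IsSturmLiouvilleSolution p q (ω ^ 2) (Ioo a b) (sppsSecondSolution p g ω)
      (sppsSecondSolutionDeriv p g ω) :=
  hgsol.mul_of_hasDerivAt isOpen_Ioo hg₀ hp₀
    (fun _ ht => (hasDerivAt_sppsOdd_sppsEven hp hp₀ hg hg₀ h₀ ht).1)
    (fun _ ht => (hasDerivAt_sppsOdd_sppsEven hp hp₀ hg hg₀ h₀ ht).2)

theorem contDiffOn_sppsSecondSolution
    (hgsol : IsSturmLiouvilleSolution p q 0 (Ioo a b) g (deriv g)) :
    ContDiffOn ℝ 2 (sppsSecondSolution p g ω) (Ioo a b) := by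
  have hFH := fun x (hx : x ∈ Ioo a b) =>
    hasDerivAt_sppsOdd_sppsEven (ω := ω) hp hp₀ hg hg₀ h₀ hx
  have hF := fun x hx => (hFH x hx).1
  have hH := fun x hx => (hFH x hx).2
  have hgC1 : ContDiffOn ℝ 1 g (Ioo a b) := hg.of_le one_le_two
  have hpg : ∀ x ∈ Ioo a b, p x * g x ≠ 0 := fun x hx => mul_ne_zero (hp₀ x hx) (hg₀ x hx)
  have hg' : ContDiffOn ℝ 1 (deriv g) (Ioo a b) :=
    ((contDiffOn_succ_iff_deriv_of_isOpen (n := 1) isOpen_Ioo).mp hg).2.2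
  have hFC1 := contDiffOn_succ_of_hasDerivAt (n := 0) isOpen_Ioo hF <| contDiffOn_zero.mpr <|
    ((hp.continuousOn.mul (hgC1.continuousOn.pow 2)).inv₀ fun x hx =>
      mul_ne_zero (hp₀ x hx) (pow_ne_zero 2 (hg₀ x hx))).mul (HasDerivAt.continuousOn hH)
  have hHC1 := contDiffOn_succ_of_hasDerivAt (n := 0) isOpen_Ioo hH <| contDiffOn_zero.mpr <|
    (continuousOn_const.mul (hgC1.continuousOn.pow 2)).mul (HasDerivAt.continuousOn hF)
  exact contDiffOn_succ_of_hasDerivAt (n := 1) isOpen_Ioo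
    (fun x hx => (isSturmLiouvilleSolution_sppsSecondSolution hp hp₀ hg hg₀ h₀ hgsol x hx).1)
    ((hg'.mul hFC1).add (hHC1.mul ((hp.mul hgC1).inv hpg)))

end SppsSecondSolution

theorem dirichlet_spectral_characterization_general (a b : ℝ) (ha : a < 0) (hb : 1 < b)
    (ω : ℂ) (p q g0 : ℝ → ℂ)
    (hp : ContDiffOn ℝ 1 p (Set.Ioo a b))
    (hp0 : ∀ x ∈ Set.Ioo a b, p x ≠ 0)
    (hq : ContinuousOn q (Set.Ioo a b))
    (hg : ContDiffOn ℝ 2 g0 (Set.Ioo a b))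
    (hg0 : ∀ x ∈ Set.Ioo a b, g0 x ≠ 0)
    (heq : ∀ x ∈ Set.Ioo a b,
      deriv (fun y => p y * deriv g0 y) x + q x * g0 x = 0) :
    (∃ u : ℝ → ℂ, ContDiffOn ℝ 2 u (Set.Ioo a b) ∧
      (∃ x ∈ Set.Icc (0 : ℝ) 1, u x ≠ 0) ∧
      (∀ x ∈ Set.Ioo a b,
        deriv (fun y => p y * deriv u y) x + q x * u x = ω ^ 2 * u x) ∧
      u 0 = 0 ∧ u 1 = 0) ↔
    (∑' k : ℕ, g0 1 *
        spps (fun t => (p t * g0 t ^ 2)⁻¹) (fun t => g0 t ^ 2) (2 * k + 1) 1 /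
        ((2 * k + 1)! : ℂ) * ω ^ (2 * k)) = 0 := by
  have h₀ : (0:ℝ) ∈ Ioo a b := ⟨ha, by linarith⟩
  have h₁ : (1:ℝ) ∈ Ioo a b := ⟨by linarith, hb⟩
  have hgsol : IsSturmLiouvilleSolution p q 0 (Ioo a b) g0 (deriv g0) :=
    .of_contDiffOn isOpen_Ioo hp hg (by simpa using heq)
  have hsol := isSturmLiouvilleSolution_sppsSecondSolution (ω := ω) hp hp0 hg hg0 h₀ hgsol
  have hderiv₀ : sppsSecondSolutionDeriv p g0 ω 0 ≠ 0 := by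
    rw [sppsSecondSolutionDeriv_apply_zero]
    exact inv_ne_zero (mul_ne_zero (hp0 0 h₀) (hg0 0 h₀))
  rw [← sppsSecondSolution_eq_tsum]
  constructor
  · rintro ⟨u, hu, ⟨x₀, hx₀, hux₀⟩, hueq, hu0, hu1⟩
    obtain ⟨α, β, hsub, h₀', h₁'⟩ := exists_Icc_subset_Ioo_of_mem h₀ h₁
    obtain ⟨c, hc⟩ := ((IsSturmLiouvilleSolution.of_contDiffOn isOpen_Ioo hp hu hueq).mono
      (Ioo_subset_Icc_self.trans hsub)).exists_eqOn_const_mul (hp.continuousOn.mono hsub)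
      (fun t ht => hp0 t (hsub ht)) (hq.mono hsub) (hsol.mono (Ioo_subset_Icc_self.trans hsub))
      h₀' hu0 sppsSecondSolution_apply_zero hderiv₀
    by_contra hne
    apply hux₀
    rw [hc (Icc_subset_Ioo h₀'.1 h₁'.2 hx₀),
      (mul_eq_zero.mp ((hc h₁').symm.trans hu1)).resolve_right hne]
    exact zero_mul _
  · intro h
    obtain ⟨x, hx, hne⟩ := (hsol 0 h₀).1.exists_mem_Ioo_ne_zero hderiv₀ one_pos
    exact ⟨_, contDiffOn_sppsSecondSolution hp hp0 hg hg0 h₀ hgsol,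
      ⟨x, Ioo_subset_Icc_self hx, hne⟩, fun x hx => hsol.deriv_eq isOpen_Ioo hx,
      sppsSecondSolution_apply_zero, h⟩

/-- Dirichlet spectral problem: `ω²` is an eigenvalue of `(pu')' + qu = ω²u`,
`u(0) = u(1) = 0`, iff `ω` is a zero of the analytic function
`κ(ω) = ∑_{even m} g₀(1) X⁽ᵐ⁺¹⁾(1)/(m+1)! ωᵐ`. -/
theorem dirichlet_spectral_characterization (a b : ℝ) (ha : a < 0) (hb : 1 < b)
    (ω : ℂ) (p q g0 : ℝ → ℂ)
    (hp : ContDiffOn ℝ 1 p (Set.Ioo a b))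
    (hp0 : ∀ x ∈ Set.Ioo a b, p x ≠ 0)
    (hq : ContinuousOn q (Set.Ioo a b))
    (hg : ContDiffOn ℝ 2 g0 (Set.Ioo a b))
    (hg0 : ∀ x ∈ Set.Ioo a b, g0 x ≠ 0)
    (heq : ∀ x ∈ Set.Ioo a b,
      deriv (fun y => p y * deriv g0 y) x + q x * g0 x = 0)
    (hbd : ∃ M : ℝ, ∀ x ∈ Set.Ioo a b,
      ‖g0 x‖ ≤ M ∧ ‖(g0 x)⁻¹‖ ≤ M ∧ ‖p x‖ ≤ M ∧ ‖(p x)⁻¹‖ ≤ M) :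
    (∃ u : ℝ → ℂ, ContDiffOn ℝ 2 u (Set.Ioo a b) ∧
      (∃ x ∈ Set.Icc (0 : ℝ) 1, u x ≠ 0) ∧
      (∀ x ∈ Set.Ioo a b,
        deriv (fun y => p y * deriv u y) x + q x * u x = ω ^ 2 * u x) ∧
      u 0 = 0 ∧ u 1 = 0) ↔
    (∑' k : ℕ, g0 1 *
        spps (fun t => (p t * g0 t ^ 2)⁻¹) (fun t => g0 t ^ 2) (2 * k + 1) 1 /
        ((2 * k + 1)! : ℂ) * ω ^ (2 * k)) = 0 :=
  dirichlet_spectral_characterization_general a b ha hb ω p q g0 hp hp0 hq hg hg0 heq
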